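/- arXiv:2306.09194 — 4 statements merged into one kernel-verified Lean document; each statement's English description precedes it below -/
import Mathlib

section
/- Let p ∈ (0,1) and let u be uniformly distributed on [0,1]. Define the score s(u) = ln(1/u) if u ≤ p, and s(u) = ln(1/(1−u)) if u > p. Then E[s(u)] = ∫₀^p ln(1/u) du + ∫_p^1 ln(1/(1−u)) du = 1 + ln(2)·H₂(p), where H₂(p) = −p log₂ p − (1−p) log₂(1−p) is the binary Shannon entropy of p. -/
/-!
The law of `u` turns the expectation into `∫₀¹ s`. Splitting at `p`, both pieces are instances of
`∫ log (1/x) = x - x log x` (the second after `x ↦ 1 - x`), and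
`p - p ln p + (1 - p) - (1 - p) ln (1 - p)` is `1 + ln 2 · H₂(p)` because `ln 2 · log₂ = ln`.
-/

open MeasureTheory Real Set intervalIntegral
open scoped Interval

theorem intervalIntegrable_log_one_div (a b : ℝ) :
    IntervalIntegrable (fun x => log (1 / x)) volume a b := by
  simp only [one_div, log_inv]
  exact intervalIntegrable_log'.neg

theorem integral_log_one_div (a b : ℝ) :
    ∫ x in a..b, log (1 / x) = a * log a - b * log b + b - a := by
  simp only [one_div, log_inv, intervalIntegral.integral_neg, integral_log]
  ring

theorem intervalIntegrable_log_one_div_one_sub (a b : ℝ) :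
    IntervalIntegrable (fun x => log (1 / (1 - x))) volume a b := by
  simpa using (intervalIntegrable_log_one_div (1 - a) (1 - b)).comp_sub_left 1

theorem integral_log_one_div_one_sub (p : ℝ) :
    ∫ x in p..1, log (1 / (1 - x)) = (1 - p) - (1 - p) * log (1 - p) := by
  rw [intervalIntegral.integral_comp_sub_left (fun x => log (1 / x)), integral_log_one_div]
  ring_nf

theorem intervalIntegral_ite_le {E : Type*} [NormedAddCommGroup E] [NormedSpace ℝ E]
    {μ : Measure ℝ} {f g : ℝ → E} {a p b : ℝ}
    (hap : a ≤ p) (hpb : p ≤ b)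
    (hf : IntervalIntegrable f μ a p) (hg : IntervalIntegrable g μ p b) :
    ∫ x in a..b, (if x ≤ p then f x else g x) ∂μ = (∫ x in a..p, f x ∂μ) + ∫ x in p..b, g x ∂μ := by
  have hleft : EqOn (fun x => if x ≤ p then f x else g x) f (Ι a p) := fun x hx =>
    if_pos (uIoc_of_le hap ▸ hx).2
  have hright : EqOn (fun x => if x ≤ p then f x else g x) g (Ι p b) := fun x hx =>
    if_neg (not_le.2 (uIoc_of_le hpb ▸ hx).1)
  rw [← integral_add_adjacent_intervals ((intervalIntegrable_congr hleft).2 hf)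
      ((intervalIntegrable_congr hright).2 hg),
    integral_congr_ae (.of_forall hleft), integral_congr_ae (.of_forall hright)]

theorem integral_comp_eq_intervalIntegral_of_map_eq_uniform {Ω E : Type*} [MeasurableSpace Ω]
    [NormedAddCommGroup E] [NormedSpace ℝ E] {μ : Measure Ω} {u : Ω → ℝ}
    (hu : μ.map u = volume.restrict (Icc 0 1)) {f : ℝ → E}
    (hf : AEStronglyMeasurable f (volume.restrict (Icc 0 1))) :
    ∫ ω, f (u ω) ∂μ = ∫ x in 0..1, f x := by
  -- `μ.map u = 0` whenever `u` is not a.e.-measurable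
  have hu_meas : AEMeasurable u μ := .of_map_ne_zero (by simp [hu])
  rw [← integral_map hu_meas (hu ▸ hf), hu, integral_Icc_eq_integral_Ioc,
    intervalIntegral.integral_of_le zero_le_one]

theorem expected_watermarked_score_general
    {Ω : Type*} [MeasurableSpace Ω] (μ : Measure Ω)
    (u : Ω → ℝ)
    (hu : μ.map u = volume.restrict (Set.Icc (0 : ℝ) 1))
    (p : ℝ) (hp : p ∈ Set.Ioo (0 : ℝ) 1) :
    (∫ ω, (if u ω ≤ p then Real.log (1 / u ω) else Real.log (1 / (1 - u ω))) ∂μ)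
        = (∫ x in (0:ℝ)..p, Real.log (1 / x)) + (∫ x in p..(1:ℝ), Real.log (1 / (1 - x))) ∧
    (∫ ω, (if u ω ≤ p then Real.log (1 / u ω) else Real.log (1 / (1 - u ω))) ∂μ)
        = 1 + Real.log 2 * (-(p * Real.logb 2 p) - (1 - p) * Real.logb 2 (1 - p)) := by
  obtain ⟨hp0, hp1⟩ := hp
  have hscore_meas : Measurable fun x : ℝ => if x ≤ p then log (1 / x) else log (1 / (1 - x)) :=
    .ite measurableSet_Iic (by fun_prop) (by fun_prop)
  have hsplit := (integral_comp_eq_intervalIntegral_of_map_eq_uniform hu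
    hscore_meas.aestronglyMeasurable).trans <| intervalIntegral_ite_le hp0.le hp1.le
      (intervalIntegrable_log_one_div 0 p) (intervalIntegrable_log_one_div_one_sub p 1)
  refine ⟨hsplit, ?_⟩
  rw [hsplit, integral_log_one_div, integral_log_one_div_one_sub, logb, logb]
  field_simp
  ring

/-- For `p ∈ (0,1)` and `u` uniform on `[0,1]`, the expected score
`s(u) = ln(1/u)` if `u ≤ p` and `ln(1/(1-u))` otherwise, satisfies
`E[s(u)] = ∫₀^p ln(1/u) du + ∫_p^1 ln(1/(1-u)) du = 1 + ln(2)·H₂(p)`. -/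
theorem expected_watermarked_score
    {Ω : Type*} [MeasurableSpace Ω] (μ : Measure Ω) [IsProbabilityMeasure μ]
    (u : Ω → ℝ) (hu_meas : Measurable u)
    (hu : μ.map u = volume.restrict (Set.Icc (0 : ℝ) 1))
    (p : ℝ) (hp : p ∈ Set.Ioo (0 : ℝ) 1) :
    (∫ ω, (if u ω ≤ p then Real.log (1 / u ω) else Real.log (1 / (1 - u ω))) ∂μ)
        = (∫ x in (0:ℝ)..p, Real.log (1 / x)) + (∫ x in p..(1:ℝ), Real.log (1 / (1 - x))) ∧
    (∫ ω, (if u ω ≤ p then Real.log (1 / u ω) else Real.log (1 / (1 - u ω))) ∂μ)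
        = 1 + Real.log 2 * (-(p * Real.logb 2 p) - (1 - p) * Real.logb 2 (1 - p)) :=
  expected_watermarked_score_general μ u hu p hp
end

section
/- Let n ≥ 1 be an integer and let τ be a real number with 0 < τ ≤ n. Then (e^{√(τ/n)} / (1 + √(τ/n)))^{−n} ≤ (4/5)^{τ}. -/
/-! With `t = τ / n ∈ (0, 1]` and `s = √t`, the bound `e^s ≥ 1 + s + s²/2` gives
`e^s / (1 + s) ≥ 1 + t/4` because `s ≤ 1`, and Bernoulli's inequality for the exponent
`t ≤ 1` gives `(5/4)^t ≤ 1 + t/4`; raising both to the power `n` yields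
`(5/4)^τ ≤ (e^s / (1 + s))^n`. -/

open Real

lemma one_add_rpow_mul_le_one_add_mul_pow {c t : ℝ} (hc : -1 ≤ c) (ht0 : 0 ≤ t) (ht1 : t ≤ 1)
    (n : ℕ) : (1 + c) ^ (t * n) ≤ (1 + t * c) ^ n := by
  rw [rpow_mul (by linarith), rpow_natCast]
  exact pow_le_pow_left₀ (rpow_nonneg (by linarith) t)
    (rpow_one_add_le_one_add_mul_self hc ht0 ht1) n

lemma one_add_sq_div_four_le_exp_div_one_add {s : ℝ} (hs0 : 0 ≤ s) (hs1 : s ≤ 1) :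
    1 + s ^ 2 / 4 ≤ exp s / (1 + s) := by
  rw [le_div_iff₀ (by linarith)]
  nlinarith [quadratic_le_exp_of_nonneg hs0, mul_nonneg (sq_nonneg s) (sub_nonneg.2 hs1)]

theorem tail_estimate_small_tau_general (n : ℕ) (τ : ℝ) (hτ0 : 0 < τ)
    (hτ : τ ≤ (n : ℝ)) :
    (Real.exp (Real.sqrt (τ / n)) / (1 + Real.sqrt (τ / n))) ^ (-(n : ℝ))
      ≤ (4 / 5 : ℝ) ^ τ := by
  have hn0 : (0 : ℝ) < n := hτ0.trans_le hτ
  set s := √(τ / n)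
  have hs_sq : s ^ 2 = τ / n := sq_sqrt (by positivity)
  have hs1 : s ≤ 1 := sqrt_le_one.mpr ((div_le_one hn0).2 hτ)
  have hpow : (5 / 4 : ℝ) ^ τ ≤ (exp s / (1 + s)) ^ n :=
    calc (5 / 4 : ℝ) ^ τ = (1 + 1 / 4) ^ (τ / n * n) := by
          rw [div_mul_cancel₀ τ hn0.ne']; norm_num
      _ ≤ (1 + τ / n * (1 / 4)) ^ n :=
          one_add_rpow_mul_le_one_add_mul_pow (by norm_num) (by positivity)
            ((div_le_one hn0).2 hτ) n
      _ ≤ (exp s / (1 + s)) ^ n := by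
          gcongr
          linarith [one_add_sq_div_four_le_exp_div_one_add (sqrt_nonneg _) hs1]
  rw [rpow_neg (by positivity), rpow_natCast, show (4 / 5 : ℝ) = (5 / 4)⁻¹ by norm_num,
    inv_rpow (by norm_num)]
  exact inv_anti₀ (by positivity) hpow

/-- For an integer `n ≥ 1` and real `0 < τ ≤ n`:
`(e^{√(τ/n)} / (1 + √(τ/n)))^{−n} ≤ (4/5)^{τ}`. -/
theorem tail_estimate_small_tau (n : ℕ) (hn : 1 ≤ n) (τ : ℝ) (hτ0 : 0 < τ)
    (hτ : τ ≤ (n : ℝ)) :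
    (Real.exp (Real.sqrt (τ / n)) / (1 + Real.sqrt (τ / n))) ^ (-(n : ℝ))
      ≤ (4 / 5 : ℝ) ^ τ :=
  tail_estimate_small_tau_general n τ hτ0 hτ
end

section
/- Let L ≥ 1 be an integer, let λ > 0 be real, and let E₁, …, E_L be i.i.d. exponential random variables with rate 1. Then the probability that there exists an index i ∈ {0, 1, …, L−1} with ∑_{j=i+1}^{L} E_j > (L−i) + λ·√(L−i) is at most L·(4/5)^λ. -/
/-!
For `t < 1` a rate-1 exponential has moment generating function `(1 - t)⁻¹`, so by independence
a sum of `n` of them has `(1 - t)⁻ⁿ`. Chernoff's bound with `t = λ / (λ + 2√n)`, for which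
`t / (1 - t) = λ / (2√n)`, together with `(1 - t)⁻¹ ≤ exp (t / (1 - t))`, bounds the tail
`Pr[S > n + λ√n]` by `exp (-λ²√n / (2 (λ + 2√n)))`, which is at most `exp (-λ/4) ≤ (4/5)^λ`
once `λ ≥ 2`; a union bound over the `L` suffix sums finishes. For `λ < 2` Chernoff is too weak,
but then either `L ≥ 2` and `L (4/5)^λ ≥ 32/25 > 1`, or `L = 1` and the tail `exp (-(1 + λ))`
is explicit.
-/

open MeasureTheory ProbabilityTheory Set

lemma mgf_id_expMeasure {r t : ℝ} (hr : 0 < r) (ht : t < r) :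
    mgf id (expMeasure r) t = r / (r - t) := by
  have hpdf (x : ℝ) : (exponentialPDF r x).toReal * Real.exp (t * x) =
      (Ici 0).indicator (fun x => r * Real.exp ((t - r) * x)) x := by
    by_cases hx : 0 ≤ x
    · rw [exponentialPDF_of_nonneg hx, ENNReal.toReal_ofReal (by positivity),
        indicator_of_mem (mem_Ici.2 hx), mul_assoc, ← Real.exp_add]
      ring_nf
    · rw [exponentialPDF_of_neg (not_le.1 hx), indicator_of_notMem (by simpa using hx)]
      simp
  change ∫ x, Real.exp (t * x) ∂volume.withDensity (exponentialPDF r) = _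
  rw [integral_withDensity_eq_integral_toReal_smul (f := exponentialPDF r)
    (measurable_exponentialPDFReal r).ennreal_ofReal (ae_of_all _ fun _ => ENNReal.ofReal_lt_top)]
  simp only [smul_eq_mul, hpdf]
  rw [integral_indicator measurableSet_Ici, integral_Ici_eq_integral_Ioi, integral_const_mul,
    integral_exp_mul_Ioi (by linarith), mul_zero, Real.exp_zero, neg_div, ← div_neg, neg_sub,
    mul_one_div]

lemma inv_one_sub_pow_le_exp {t : ℝ} (ht : t < 1) (n : ℕ) :
    ((1 - t)⁻¹) ^ n ≤ Real.exp (n * (t / (1 - t))) := by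
  have h1t : 0 < 1 - t := by linarith
  have h : (1 - t)⁻¹ ≤ Real.exp (t / (1 - t)) := by
    convert Real.add_one_le_exp (t / (1 - t)) using 1
    field_simp
    ring
  rw [Real.exp_nat_mul]
  exact pow_le_pow_left₀ (by positivity) h n

lemma chernoff_exponent_le {s lam : ℝ} (hs : 1 ≤ s) (hlam : 2 ≤ lam) :
    -(lam / (lam + 2 * s)) * (s ^ 2 + lam * s) +
      s ^ 2 * (lam / (lam + 2 * s) / (1 - lam / (lam + 2 * s))) ≤ -(lam / 4) := by
  have hd : 0 < lam + 2 * s := by linarith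
  have hodds : lam / (lam + 2 * s) / (1 - lam / (lam + 2 * s)) = lam / (2 * s) := by
    field_simp
    ring
  rw [hodds, ← sub_nonneg]
  have key : 0 ≤ (lam - 1) * (2 * s - 1) - 1 := by nlinarith
  have hid : -(lam / 4) - (-(lam / (lam + 2 * s)) * (s ^ 2 + lam * s) + s ^ 2 * (lam / (2 * s))) =
      lam * ((lam - 1) * (2 * s - 1) - 1) / (4 * (lam + 2 * s)) := by
    field_simp
    ring
  rw [hid]
  positivity

lemma exp_neg_div_four_le_four_fifths_rpow {lam : ℝ} (hlam : 0 ≤ lam) :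
    Real.exp (-(lam / 4)) ≤ (4 / 5 : ℝ) ^ lam := by
  have hbase : Real.exp (-(1 / 4)) ≤ 4 / 5 := by
    rw [Real.exp_neg, inv_le_comm₀ (Real.exp_pos _) (by norm_num)]
    linarith [Real.add_one_le_exp (1 / 4 : ℝ)]
  calc Real.exp (-(lam / 4)) = Real.exp (-(1 / 4)) ^ lam := by rw [← Real.exp_mul]; ring_nf
    _ ≤ (4 / 5 : ℝ) ^ lam := Real.rpow_le_rpow (Real.exp_pos _).le hbase hlam

section ExponentialTail

variable {Ω : Type*} [MeasurableSpace Ω] {μ : Measure Ω} {ι : Type*} {E : ι → Ω → ℝ}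

lemma measure_sum_gt_le_four_fifths_rpow_of_card_eq_one
    (htail : ∀ j, ∀ t : ℝ, 0 ≤ t → μ {ω | E j ω > t} = ENNReal.ofReal (Real.exp (-t)))
    {s : Finset ι} (hs : s.card = 1) {lam : ℝ} (hlam : 0 ≤ lam) :
    μ {ω | ∑ j ∈ s, E j ω > s.card + lam * Real.sqrt s.card} ≤
      ENNReal.ofReal ((4 / 5 : ℝ) ^ lam) := by
  obtain ⟨j, rfl⟩ := Finset.card_eq_one.1 hs
  simp only [Finset.sum_singleton, Finset.card_singleton, Nat.cast_one, Real.sqrt_one, mul_one]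
  rw [htail j _ (by linarith)]
  refine ENNReal.ofReal_le_ofReal ((Real.exp_le_exp.2 ?_).trans
    (exp_neg_div_four_le_four_fifths_rpow hlam))
  linarith

variable [IsProbabilityMeasure μ]

lemma map_eq_expMeasure_one_of_tail {X : Ω → ℝ} (hX : Measurable X)
    (htail : ∀ t : ℝ, 0 ≤ t → μ {ω | X ω > t} = ENNReal.ofReal (Real.exp (-t))) :
    μ.map X = expMeasure 1 := by
  have := isProbabilityMeasure_expMeasure one_pos
  have : IsProbabilityMeasure (μ.map X) := Measure.isProbabilityMeasure_map hX.aemeasurable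
  have hle (a : ℝ) : μ {ω | X ω ≤ a} = 1 - μ {ω | X ω > a} := by
    rw [← prob_compl_eq_one_sub (measurableSet_lt measurable_const hX)]
    congr 1; ext ω; simp
  refine Measure.eq_of_cdf _ _ (StieltjesFunction.ext fun a => ?_)
  rw [cdf_expMeasure_eq one_pos, cdf_eq_real, measureReal_def,
    Measure.map_apply hX measurableSet_Iic]
  change (μ {ω | X ω ≤ a}).toReal = _
  split_ifs with ha
  · rw [hle, htail a ha, one_mul,
      ENNReal.toReal_sub_of_le (by simp [Real.exp_le_one_iff, ha]) ENNReal.one_ne_top,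
      ENNReal.toReal_ofReal (Real.exp_pos _).le, ENNReal.toReal_one]
  · have h0 : μ {ω | X ω ≤ 0} = 0 := by simp [hle, htail 0 le_rfl]
    rw [measure_mono_null (s := {ω | X ω ≤ a})
      (fun ω (h : X ω ≤ a) => (show X ω ≤ 0 by linarith)) h0, ENNReal.toReal_zero]

lemma mgf_eq_inv_one_sub_of_tail {X : Ω → ℝ} (hX : Measurable X)
    (htail : ∀ t : ℝ, 0 ≤ t → μ {ω | X ω > t} = ENNReal.ofReal (Real.exp (-t)))
    {t : ℝ} (ht : t < 1) : mgf X μ t = (1 - t)⁻¹ := by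
  rw [← mgf_id_map hX.aemeasurable, map_eq_expMeasure_one_of_tail hX htail,
    mgf_id_expMeasure one_pos ht, one_div]

lemma integrable_exp_mul_of_tail {X : Ω → ℝ} (hX : Measurable X)
    (htail : ∀ t : ℝ, 0 ≤ t → μ {ω | X ω > t} = ENNReal.ofReal (Real.exp (-t)))
    {t : ℝ} (ht : t < 1) : Integrable (fun ω => Real.exp (t * X ω)) μ :=
  mgf_pos_iff.1 (by rw [mgf_eq_inv_one_sub_of_tail hX htail ht]; exact inv_pos.2 (by linarith))

lemma measureReal_sum_ge_le (hmeas : ∀ j, Measurable (E j)) (hindep : iIndepFun E μ)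
    (htail : ∀ j, ∀ t : ℝ, 0 ≤ t → μ {ω | E j ω > t} = ENNReal.ofReal (Real.exp (-t)))
    (s : Finset ι) (a : ℝ) {t : ℝ} (ht0 : 0 ≤ t) (ht1 : t < 1) :
    μ.real {ω | a ≤ ∑ j ∈ s, E j ω} ≤ Real.exp (-t * a) * ((1 - t)⁻¹) ^ s.card := by
  have hmgf : mgf (∑ j ∈ s, E j) μ t = ((1 - t)⁻¹) ^ s.card := by
    rw [hindep.mgf_sum hmeas s, Finset.prod_congr rfl fun j _ =>
      mgf_eq_inv_one_sub_of_tail (hmeas j) (htail j) ht1, Finset.prod_const]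
  have hint := hindep.integrable_exp_mul_sum hmeas (s := s) fun j _ =>
    integrable_exp_mul_of_tail (hmeas j) (htail j) ht1
  simpa [hmgf, Finset.sum_apply] using measure_ge_le_exp_mul_mgf a ht0 hint

lemma measure_sum_gt_le_four_fifths_rpow (hmeas : ∀ j, Measurable (E j))
    (hindep : iIndepFun E μ)
    (htail : ∀ j, ∀ t : ℝ, 0 ≤ t → μ {ω | E j ω > t} = ENNReal.ofReal (Real.exp (-t)))
    {s : Finset ι} (hs : s.Nonempty) {lam : ℝ} (hlam : 2 ≤ lam) :
    μ {ω | ∑ j ∈ s, E j ω > s.card + lam * Real.sqrt s.card} ≤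
      ENNReal.ofReal ((4 / 5 : ℝ) ^ lam) := by
  set n := s.card
  have hsqrt : 1 ≤ Real.sqrt n := Real.one_le_sqrt.2 (by exact_mod_cast hs.card_pos)
  set t := lam / (lam + 2 * Real.sqrt n)
  have ht0 : 0 ≤ t := by positivity
  have ht1 : t < 1 := (div_lt_one (by positivity)).2 (by linarith)
  have hexponent := chernoff_exponent_le hsqrt hlam
  rw [Real.sq_sqrt n.cast_nonneg] at hexponent
  calc μ {ω | ∑ j ∈ s, E j ω > n + lam * Real.sqrt n}
      ≤ μ {ω | n + lam * Real.sqrt n ≤ ∑ j ∈ s, E j ω} :=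
        measure_mono (ofPred_subset_ofPred.2 fun _ => le_of_lt)
    _ = ENNReal.ofReal (μ.real {ω | n + lam * Real.sqrt n ≤ ∑ j ∈ s, E j ω}) :=
        (ENNReal.ofReal_toReal (measure_ne_top _ _)).symm
    _ ≤ ENNReal.ofReal ((4 / 5 : ℝ) ^ lam) := by
      refine ENNReal.ofReal_le_ofReal ?_
      calc _ ≤ Real.exp (-t * (n + lam * Real.sqrt n)) * ((1 - t)⁻¹) ^ n :=
            measureReal_sum_ge_le hmeas hindep htail s _ ht0 ht1
        _ ≤ Real.exp (-t * (n + lam * Real.sqrt n)) * Real.exp (n * (t / (1 - t))) := by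
            gcongr
            exact inv_one_sub_pow_le_exp ht1 n
        _ ≤ Real.exp (-(lam / 4)) := by
            rw [← Real.exp_add, Real.exp_le_exp]
            exact hexponent
        _ ≤ (4 / 5 : ℝ) ^ lam := exp_neg_div_four_le_four_fifths_rpow (by linarith)

end ExponentialTail

lemma Fin.card_filter_le_val {L i : ℕ} (hi : i < L) :
    (Finset.univ.filter (fun j : Fin L => i ≤ (j : ℕ))).card = L - i := by
  rw [show Finset.univ.filter (fun j : Fin L => i ≤ (j : ℕ)) = Finset.Ici ⟨i, hi⟩ by
    ext j; simp [Fin.le_def], Fin.card_Ici]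

lemma measure_exists_lt_le_mul {Ω : Type*} [MeasurableSpace Ω] {μ : Measure Ω}
    {P : ℕ → Ω → Prop} {n : ℕ} {c : ENNReal} (h : ∀ i < n, μ {ω | P i ω} ≤ c) :
    μ {ω | ∃ i < n, P i ω} ≤ n * c := by
  have hunion : {ω | ∃ i < n, P i ω} = ⋃ i ∈ Finset.range n, {ω | P i ω} := by
    ext ω
    simp
  calc μ {ω | ∃ i < n, P i ω} ≤ ∑ i ∈ Finset.range n, μ {ω | P i ω} :=
        hunion ▸ measure_biUnion_finset_le _ _
    _ ≤ ∑ _i ∈ Finset.range n, c := Finset.sum_le_sum fun i hi => h i (Finset.mem_range.1 hi)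
    _ = n * c := by rw [Finset.sum_const, Finset.card_range, nsmul_eq_mul]

lemma one_le_natCast_mul_four_fifths_rpow {L : ℕ} (hL : 2 ≤ L) {lam : ℝ} (hlam : lam ≤ 2) :
    1 ≤ (L : ℝ) * (4 / 5 : ℝ) ^ lam := by
  have hpow : (16 / 25 : ℝ) ≤ (4 / 5 : ℝ) ^ lam := by
    calc (16 / 25 : ℝ) = (4 / 5 : ℝ) ^ (2 : ℝ) := by norm_num
      _ ≤ (4 / 5 : ℝ) ^ lam := Real.rpow_le_rpow_of_exponent_ge (by norm_num) (by norm_num) hlam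
  have hL' : (2 : ℝ) ≤ L := by exact_mod_cast hL
  nlinarith

theorem detector_union_bound_general
    {Ω : Type*} [MeasurableSpace Ω] (μ : Measure Ω) [IsProbabilityMeasure μ]
    (L : ℕ) (lam : ℝ) (hlam : 0 < lam)
    (E : Fin L → Ω → ℝ) (hmeas : ∀ j, Measurable (E j))
    (hindep : iIndepFun E μ)
    (hexp : ∀ j, ∀ t : ℝ, 0 ≤ t → μ {ω | E j ω > t} = ENNReal.ofReal (Real.exp (-t))) :
    μ {ω | ∃ i < L,
        (∑ j ∈ Finset.univ.filter (fun j : Fin L => i ≤ (j : ℕ)), E j ω)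
          > ((L : ℝ) - i) + lam * Real.sqrt ((L : ℝ) - i)}
      ≤ ENNReal.ofReal ((L : ℝ) * (4 / 5 : ℝ) ^ lam) := by
  by_cases htrivial : lam ≤ 2 ∧ 2 ≤ L
  · exact prob_le_one.trans
      (ENNReal.one_le_ofReal.2 (one_le_natCast_mul_four_fifths_rpow htrivial.2 htrivial.1))
  have hsuffix : ∀ i < L, μ {ω | (∑ j ∈ Finset.univ.filter (fun j : Fin L => i ≤ (j : ℕ)), E j ω)
      > ((L : ℝ) - i) + lam * Real.sqrt ((L : ℝ) - i)} ≤ ENNReal.ofReal ((4 / 5 : ℝ) ^ lam) := by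
    intro i hi
    rw [← Nat.cast_sub hi.le, ← Fin.card_filter_le_val hi]
    rcases not_and_or.1 htrivial with hlam2 | hL1
    · exact measure_sum_gt_le_four_fifths_rpow hmeas hindep hexp
        (Finset.card_pos.1 (by rw [Fin.card_filter_le_val hi]; omega)) (by linarith)
    · exact measure_sum_gt_le_four_fifths_rpow_of_card_eq_one hexp
        (by rw [Fin.card_filter_le_val hi]; omega) hlam.le
  calc _ ≤ L * ENNReal.ofReal ((4 / 5 : ℝ) ^ lam) := measure_exists_lt_le_mul hsuffix
    _ = ENNReal.ofReal ((L : ℝ) * (4 / 5 : ℝ) ^ lam) := by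
      rw [ENNReal.ofReal_mul (by positivity), ENNReal.ofReal_natCast]

/-- Soundness core: for i.i.d. rate-1 exponentials `E₁, …, E_L` (indexed here by
`Fin L`, where `E j` is `E_{j+1}`), the probability that some index
`i ∈ {0, …, L−1}` has `∑_{j=i+1}^{L} E_j > (L−i) + λ·√(L−i)` is at most
`L·(4/5)^λ`. -/
theorem detector_union_bound
    {Ω : Type*} [MeasurableSpace Ω] (μ : Measure Ω) [IsProbabilityMeasure μ]
    (L : ℕ) (hL : 1 ≤ L) (lam : ℝ) (hlam : 0 < lam)
    (E : Fin L → Ω → ℝ) (hmeas : ∀ j, Measurable (E j))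
    (hindep : iIndepFun E μ)
    (hexp : ∀ j, ∀ t : ℝ, 0 ≤ t → μ {ω | E j ω > t} = ENNReal.ofReal (Real.exp (-t))) :
    μ {ω | ∃ i < L,
        (∑ j ∈ Finset.univ.filter (fun j : Fin L => i ≤ (j : ℕ)), E j ω)
          > ((L : ℝ) - i) + lam * Real.sqrt ((L : ℝ) - i)}
      ≤ ENNReal.ofReal ((L : ℝ) * (4 / 5 : ℝ) ^ lam) :=
  detector_union_bound_general μ L lam hlam E hmeas hindep hexp
end

section
/- Let L ≥ 1 and let D be a probability distribution on {0,1}^L. Let U₁, …, U_L be i.i.d. uniform random variables on [0,1], and define the random string X = (X₁, …, X_L) sequentially by X_j = 1 if U_j ≤ q_j and X_j = 0 otherwise, where q_j = Pr_{Y∼D}[Y_j = 1 | Y_1 = X_1, …, Y_{j−1} = X_{j−1}] is the conditional probability under D of the j-th bit being 1 given the previously generated bits (whenever the conditioning event has positive probability). Define the score s(1,u) = ln(1/u) and s(0,u) = ln(1/(1−u)). Then X is distributed according to D, and E[∑_{j=1}^{L} s(X_j, U_j)] = L + ln(2)·H(D), where H(D) = ∑_{y ∈ {0,1}^L} −D(y)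 log₂ D(y) is the Shannon entropy of D (with the convention 0·log₂ 0 = 0). -/
open MeasureTheory ProbabilityTheory

/-- The conditional probability `q_j`, under a distribution `D` on `{0,1}^L`, that
the `j`-th bit equals `1` (encoded as `true`) given that the bits at indices `< j`
agree with `prev` (with value `0` when the conditioning event has probability
zero, via Lean's convention `0/0 = 0`). -/
noncomputable def condProb {L : ℕ} (D : PMF (Fin L → Bool)) (j : Fin L)
    (prev : Fin L → Bool) : ℝ :=
  (∑ y : Fin L → Bool,
      if (∀ i : Fin L, (i : ℕ) < (j : ℕ) → y i = prev i) ∧ y j = true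
      then (D y).toReal else 0) /
  (∑ y : Fin L → Bool,
      if (∀ i : Fin L, (i : ℕ) < (j : ℕ) → y i = prev i)
      then (D y).toReal else 0)

open scoped Classical in
/-- Sequential generation of the watermarked string: given realized uniforms `u`,
`genAux D u k` fixes the first `k` bits (and is `false` beyond them), setting bit
`j` to `1` iff `u j ≤ q_j` where `q_j` is the conditional probability of the
`j`-th bit being `1` given the previously generated bits. -/
noncomputable def genAux {L : ℕ} (D : PMF (Fin L → Bool)) (u : Fin L → ℝ) :
    ℕ → (Fin L → Bool)
  | 0 => fun _ => false
  | (k + 1) => fun i =>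
      if (i : ℕ) = k then
        if u i ≤ condProb D i (genAux D u k) then true else false
      else genAux D u k i

/-! For a fixed string `y`, the uniforms generating `y` form the box `∏ⱼ Iⱼ` with
`Iⱼ = [0, qⱼ(y)]` if `yⱼ = 1` and `Iⱼ = (qⱼ(y), 1]` otherwise: the thresholds only look at the
prefix, so the generated bits agree with `y` up to `j` exactly when the uniforms lie in the
first `j` intervals. The box has volume `∏ⱼ mⱼ(y)`, the product of the conditional
probabilities of the bits of `y`, which is `D(y)` by the chain rule. On that box the score of
bit `j` integrates to `(∏_{i ≠ j} mᵢ) (mⱼ - mⱼ log mⱼ)`; summing over `j`, the Leibniz rule for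
`t ↦ -t log t` gives `L·D(y) - D(y) log D(y)`. -/

namespace Watermark

open Real Set

lemma negMulLog_prod {ι : Type*} [DecidableEq ι] (s : Finset ι) (m : ι → ℝ) :
    negMulLog (∏ i ∈ s, m i) = ∑ j ∈ s, (∏ i ∈ s.erase j, m i) * negMulLog (m j) := by
  induction s using Finset.induction_on with
  | empty => simp
  | insert a s ha ih =>
    rw [Finset.prod_insert ha, negMulLog_mul, ih, Finset.sum_insert ha, Finset.erase_insert ha,
      Finset.mul_sum]
    congr 1
    refine Finset.sum_congr rfl fun j hj => ?_
    rw [Finset.erase_insert_of_ne (ne_of_mem_of_not_mem hj ha).symm,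
      Finset.prod_insert fun h => ha (Finset.mem_of_mem_erase h)]
    ring

lemma integral_comp_eval_pi {ι : Type*} [Fintype ι] [DecidableEq ι] {X : ι → Type*}
    [∀ i, MeasurableSpace (X i)] {μ : ∀ i, Measure (X i)} [∀ i, IsFiniteMeasure (μ i)]
    {E : Type*} [NormedAddCommGroup E] [NormedSpace ℝ E] {i : ι} {f : X i → E}
    (hf : AEStronglyMeasurable f (μ i)) :
    ∫ x, f (x i) ∂Measure.pi μ = (∏ j ∈ Finset.univ.erase i, (μ j).real univ) • ∫ x, f x ∂μ i := by
  have hf' : AEStronglyMeasurable f ((Measure.pi μ).map (Function.eval i)) := by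
    rw [Measure.pi_map_eval]
    exact hf.smul_measure _
  rw [← integral_map (measurable_pi_apply i).aemeasurable hf', Measure.pi_map_eval,
    integral_smul_measure, ENNReal.toReal_prod]
  rfl

section OneBit

def bitMass (q : ℝ) (b : Bool) : ℝ := if b then q else 1 - q

def acceptInterval (q : ℝ) : Bool → Set ℝ
  | true => Iic q
  | false => Ioi q

noncomputable def score (b : Bool) (t : ℝ) : ℝ :=
  if b then log (1 / t) else log (1 / (1 - t))

noncomputable abbrev acceptMeasure (q : ℝ) (b : Bool) : Measure ℝ :=
  (volume.restrict (Icc 0 1)).restrict (acceptInterval q b)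

lemma mem_acceptInterval_iff {q t : ℝ} {b : Bool} :
    t ∈ acceptInterval q b ↔ (if t ≤ q then true else false) = b := by
  cases b <;> simp [acceptInterval, not_le]

lemma measurableSet_acceptInterval (q : ℝ) (b : Bool) : MeasurableSet (acceptInterval q b) := by
  cases b
  exacts [measurableSet_Ioi, measurableSet_Iic]

lemma score_true : score true = fun t => -log t := by
  ext t
  simp [score]

lemma score_false : score false = fun t => -log (1 - t) := by
  ext t
  simp [score]

variable {q : ℝ}

lemma bitMass_nonneg (hq0 : 0 ≤ q) (hq1 : q ≤ 1) (b : Bool) : 0 ≤ bitMass q b := by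
  cases b <;> simp [bitMass, hq0, hq1]

lemma acceptMeasure_true (hq : q ≤ 1) : acceptMeasure q true = volume.restrict (Icc 0 q) := by
  have hset : Iic q ∩ Icc 0 1 = Icc 0 q := by
    ext t
    simp only [mem_inter_iff, mem_Iic, mem_Icc]
    grind
  rw [acceptMeasure, acceptInterval, Measure.restrict_restrict measurableSet_Iic, hset]

lemma acceptMeasure_false (hq : 0 ≤ q) : acceptMeasure q false = volume.restrict (Ioc q 1) := by
  have hset : Ioi q ∩ Icc 0 1 = Ioc q 1 := by
    ext t
    simp only [mem_inter_iff, mem_Ioi, mem_Icc, mem_Ioc]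
    grind
  rw [acceptMeasure, acceptInterval, Measure.restrict_restrict measurableSet_Ioi, hset]

lemma acceptMeasure_univ (hq0 : 0 ≤ q) (hq1 : q ≤ 1) (b : Bool) :
    acceptMeasure q b univ = ENNReal.ofReal (bitMass q b) := by
  cases b
  · simp [acceptMeasure_false hq0, bitMass]
  · simp [acceptMeasure_true hq1, bitMass]

lemma integrable_score (hq0 : 0 ≤ q) (hq1 : q ≤ 1) (b : Bool) :
    Integrable (score b) (acceptMeasure q b) := by
  cases b
  · rw [acceptMeasure_false hq0, ← IntegrableOn,
      ← intervalIntegrable_iff_integrableOn_Ioc_of_le hq1, score_false]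
    have := (intervalIntegral.intervalIntegrable_log' (a := 1 - q) (b := 0)).comp_sub_left 1
    rw [sub_sub_cancel, sub_zero] at this
    exact this.neg
  · rw [acceptMeasure_true hq1, ← IntegrableOn, integrableOn_Icc_iff_integrableOn_Ioc,
      ← intervalIntegrable_iff_integrableOn_Ioc_of_le hq0, score_true]
    exact intervalIntegral.intervalIntegrable_log'.neg

lemma integral_score (hq0 : 0 ≤ q) (hq1 : q ≤ 1) (b : Bool) :
    ∫ t, score b t ∂acceptMeasure q b = bitMass q b + negMulLog (bitMass q b) := by
  cases b
  · rw [acceptMeasure_false hq0, ← intervalIntegral.integral_of_le hq1, score_false,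
      intervalIntegral.integral_neg, intervalIntegral.integral_comp_sub_left (fun t => log t),
      integral_log]
    simp only [sub_self, log_zero, mul_zero, sub_zero, add_zero, neg_sub, bitMass,
      Bool.false_eq_true, ↓reduceIte, negMulLog]
    ring
  · rw [acceptMeasure_true hq1, integral_Icc_eq_integral_Ioc,
      ← intervalIntegral.integral_of_le hq0, score_true, intervalIntegral.integral_neg,
      integral_log]
    simp only [log_zero, mul_zero, sub_zero, add_zero, neg_sub, bitMass, ↓reduceIte, negMulLog,
      neg_mul]
    ring

lemma integral_sum_score_pi {ι : Type*} [Fintype ι] {q : ι → ℝ} (hq0 : ∀ i, 0 ≤ q i)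
    (hq1 : ∀ i, q i ≤ 1) (b : ι → Bool) :
    ∫ u, ∑ j, score (b j) (u j) ∂Measure.pi (fun i => acceptMeasure (q i) (b i)) =
      Fintype.card ι * ∏ i, bitMass (q i) (b i) + negMulLog (∏ i, bitMass (q i) (b i)) := by
  classical
  set m := fun i => bitMass (q i) (b i)
  have hterm : ∀ j, ∫ u, score (b j) (u j) ∂Measure.pi (fun i => acceptMeasure (q i) (b i)) =
      (∏ i ∈ Finset.univ.erase j, m i) * (m j + negMulLog (m j)) := fun j => by
    rw [integral_comp_eval_pi (integrable_score (hq0 j) (hq1 j) _).aestronglyMeasurable,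
      integral_score (hq0 j) (hq1 j), smul_eq_mul]
    congr 1
    refine Finset.prod_congr rfl fun i _ => ?_
    rw [measureReal_def, acceptMeasure_univ (hq0 i) (hq1 i),
      ENNReal.toReal_ofReal (bitMass_nonneg (hq0 i) (hq1 i) _)]
  rw [integral_finsetSum _ fun j _ => integrable_comp_eval (integrable_score (hq0 j) (hq1 j) _)]
  simp_rw [hterm, mul_add, Finset.sum_add_distrib, Finset.prod_erase_mul _ _ (Finset.mem_univ _),
    negMulLog_prod, Finset.sum_const, Finset.card_univ, nsmul_eq_mul]

end OneBit

section Prefix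

variable {L : ℕ} (D : PMF (Fin L → Bool))

lemma sum_toReal_eq_one : ∑ z, (D z).toReal = 1 := by
  have h := D.tsum_coe
  rw [tsum_fintype] at h
  rw [← ENNReal.toReal_sum fun z _ => D.apply_ne_top z, h, ENNReal.toReal_one]

lemma forall_lt_succ_iff {k : ℕ} (hk : k < L) (P : Fin L → Prop) :
    (∀ i : Fin L, (i : ℕ) < k + 1 → P i) ↔ (∀ i : Fin L, (i : ℕ) < k → P i) ∧ P ⟨k, hk⟩ := by
  refine ⟨fun h => ⟨fun i hi => h i (by omega), h _ (by simp)⟩, fun ⟨h, hk⟩ i hi => ?_⟩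
  rcases Nat.lt_succ_iff_lt_or_eq.1 hi with hi | hi
  exacts [h i hi, (Fin.ext hi : i = ⟨k, _⟩) ▸ hk]

noncomputable def prefixMass (k : ℕ) (y : Fin L → Bool) : ℝ :=
  ∑ z : Fin L → Bool, if ∀ i : Fin L, (i : ℕ) < k → z i = y i then (D z).toReal else 0

noncomputable def prefixBitMass (j : Fin L) (y : Fin L → Bool) (b : Bool) : ℝ :=
  ∑ z : Fin L → Bool,
    if (∀ i : Fin L, (i : ℕ) < (j : ℕ) → z i = y i) ∧ z j = b then (D z).toReal else 0

lemma condProb_eq_div (j : Fin L) (y : Fin L → Bool) :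
    condProb D j y = prefixBitMass D j y true / prefixMass D j y := rfl

lemma prefixBitMass_nonneg (j : Fin L) (y : Fin L → Bool) (b : Bool) :
    0 ≤ prefixBitMass D j y b :=
  Finset.sum_nonneg fun _ _ => by positivity

lemma prefixMass_eq_add (j : Fin L) (y : Fin L → Bool) :
    prefixMass D j y = prefixBitMass D j y true + prefixBitMass D j y false := by
  rw [prefixMass, prefixBitMass, prefixBitMass, ← Finset.sum_add_distrib]
  refine Finset.sum_congr rfl fun z _ => ?_
  cases z j <;> simp

lemma prefixMass_succ (j : Fin L) (y : Fin L → Bool) :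
    prefixMass D (j + 1) y = prefixBitMass D j y (y j) :=
  Finset.sum_congr rfl fun _ _ => if_congr (forall_lt_succ_iff j.isLt _) rfl rfl

lemma prefixMass_zero (y : Fin L → Bool) : prefixMass D 0 y = 1 := by
  simp [prefixMass, sum_toReal_eq_one]

lemma prefixMass_length (y : Fin L → Bool) : prefixMass D L y = (D y).toReal := by
  simp [prefixMass, ← funext_iff]

lemma condProb_nonneg (j : Fin L) (y : Fin L → Bool) : 0 ≤ condProb D j y := by
  have := prefixBitMass_nonneg D j y
  rw [condProb_eq_div, prefixMass_eq_add]
  exact div_nonneg (this true) (add_nonneg (this true) (this false))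

lemma condProb_le_one (j : Fin L) (y : Fin L → Bool) : condProb D j y ≤ 1 := by
  rw [condProb_eq_div, prefixMass_eq_add]
  have := prefixBitMass_nonneg D j y
  exact div_le_one_of_le₀ (by linarith [this false]) (by linarith [this true, this false])

lemma condProb_congr (j : Fin L) {y y' : Fin L → Bool}
    (h : ∀ i : Fin L, (i : ℕ) < (j : ℕ) → y i = y' i) : condProb D j y = condProb D j y' := by
  have hpre : ∀ z : Fin L → Bool, (∀ i : Fin L, (i : ℕ) < (j : ℕ) → z i = y i) ↔
      ∀ i : Fin L, (i : ℕ) < (j : ℕ) → z i = y' i :=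
    fun z => forall_congr' fun i => imp_congr_right fun hi => by rw [h i hi]
  simp only [condProb, hpre]

/-- The chain rule for `D`. -/
lemma prefixMass_succ_eq_mul (j : Fin L) (y : Fin L → Bool) :
    prefixMass D (j + 1) y = bitMass (condProb D j y) (y j) * prefixMass D j y := by
  rw [prefixMass_succ, condProb_eq_div, prefixMass_eq_add]
  have := prefixBitMass_nonneg D j y
  -- covers the junk value `condProb D j y = 0 / 0 = 0` on a null prefix
  have hzero : prefixBitMass D j y true + prefixBitMass D j y false = 0 →
      prefixBitMass D j y true = 0 := fun h => by linarith [this true, this false]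
  cases y j
  · rw [bitMass, if_neg (by simp), sub_mul, one_mul, div_mul_cancel_of_imp hzero]
    ring
  · rw [bitMass, if_pos rfl, div_mul_cancel_of_imp hzero]

lemma prod_filter_lt_bitMass_condProb (y : Fin L → Bool) {k : ℕ} (hk : k ≤ L) :
    ∏ j ∈ Finset.univ.filter (fun j : Fin L => (j : ℕ) < k), bitMass (condProb D j y) (y j) =
      prefixMass D k y := by
  induction k with
  | zero => simp [prefixMass_zero]
  | succ k ih =>
    have hfilter : Finset.univ.filter (fun j : Fin L => (j : ℕ) < k + 1) =
        insert ⟨k, hk⟩ (Finset.univ.filter fun j : Fin L => (j : ℕ) < k) := by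
      ext j
      simp only [Order.lt_add_one_iff, Finset.mem_filter, Finset.mem_univ, true_and,
        Finset.mem_insert, Fin.ext_iff]
      omega
    rw [hfilter, Finset.prod_insert (by simp), ih (by omega)]
    exact (prefixMass_succ_eq_mul D ⟨k, hk⟩ y).symm

lemma prod_bitMass_condProb (y : Fin L → Bool) :
    ∏ j, bitMass (condProb D j y) (y j) = (D y).toReal := by
  simpa [prefixMass_length] using prod_filter_lt_bitMass_condProb D y le_rfl

end Prefix

section Generation

variable {L : ℕ} (D : PMF (Fin L → Bool))

lemma genAux_succ_apply (u : Fin L → ℝ) (k : ℕ) (i : Fin L) :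
    genAux D u (k + 1) i = if (i : ℕ) = k then
      (if u i ≤ condProb D i (genAux D u k) then true else false) else genAux D u k i := rfl

lemma genAux_agrees_iff (u : Fin L → ℝ) (y : Fin L → Bool) {k : ℕ} (hk : k ≤ L) :
    (∀ i : Fin L, (i : ℕ) < k → genAux D u k i = y i) ↔
      ∀ i : Fin L, (i : ℕ) < k → u i ∈ acceptInterval (condProb D i y) (y i) := by
  induction k with
  | zero => simp
  | succ k ih =>
    have hlow : (∀ i : Fin L, (i : ℕ) < k → genAux D u (k + 1) i = y i) ↔
        ∀ i : Fin L, (i : ℕ) < k → genAux D u k i = y i :=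
      forall_congr' fun i => imp_congr_right fun hi => by rw [genAux_succ_apply, if_neg hi.ne]
    rw [forall_lt_succ_iff hk, forall_lt_succ_iff hk, hlow, ← ih (by omega)]
    refine and_congr_right fun hagree => ?_
    rw [genAux_succ_apply, if_pos rfl, condProb_congr D _ hagree, mem_acceptInterval_iff]

lemma genAux_eq_iff (u : Fin L → ℝ) (y : Fin L → Bool) :
    genAux D u L = y ↔ ∀ i, u i ∈ acceptInterval (condProb D i y) (y i) := by
  simpa [funext_iff] using genAux_agrees_iff D u y le_rfl

lemma preimage_genAux (y : Fin L → Bool) :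
    (fun u => genAux D u L) ⁻¹' {y} = univ.pi fun i => acceptInterval (condProb D i y) (y i) := by
  ext u
  simp [genAux_eq_iff]

lemma measurable_genAux : Measurable fun u => genAux D u L :=
  measurable_to_countable' fun y => by
    rw [preimage_genAux]
    exact .univ_pi fun i => measurableSet_acceptInterval _ _

lemma restrict_pi_preimage_genAux (y : Fin L → Bool) :
    (Measure.pi fun _ => volume.restrict (Icc (0 : ℝ) 1)).restrict
        ((fun u => genAux D u L) ⁻¹' {y}) =
      Measure.pi fun i => acceptMeasure (condProb D i y) (y i) := by
  rw [preimage_genAux, Measure.restrict_pi_pi]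

lemma measurable_sum_score_genAux :
    Measurable fun u : Fin L → ℝ => ∑ j, score (genAux D u L j) (u j) := by
  unfold score
  refine Finset.measurable_sum _ fun j _ => Measurable.ite ?_ (by fun_prop) (by fun_prop)
  exact (measurable_pi_apply j).comp (measurable_genAux D) (measurableSet_singleton true)

theorem map_genAux_pi :
    (Measure.pi fun _ => volume.restrict (Icc (0 : ℝ) 1)).map (fun u => genAux D u L) =
      D.toMeasure := by
  refine Measure.ext_of_singleton fun y => ?_
  rw [Measure.map_apply (measurable_genAux D) (measurableSet_singleton y),
    ← Measure.restrict_apply_univ, restrict_pi_preimage_genAux, Measure.pi_univ,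
    PMF.toMeasure_apply_singleton _ _ (measurableSet_singleton y)]
  simp_rw [acceptMeasure_univ (condProb_nonneg D _ y) (condProb_le_one D _ y)]
  rw [← ENNReal.ofReal_prod_of_nonneg fun i _ =>
      bitMass_nonneg (condProb_nonneg D i y) (condProb_le_one D i y) _,
    prod_bitMass_condProb, ENNReal.ofReal_toReal (D.apply_ne_top y)]

theorem integral_sum_score_genAux :
    ∫ u, ∑ j, score (genAux D u L j) (u j) ∂Measure.pi (fun _ => volume.restrict (Icc 0 1)) =
      L + ∑ y, negMulLog (D y).toReal := by
  set P := Measure.pi fun _ : Fin L => volume.restrict (Icc (0 : ℝ) 1)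
  set g := fun u => genAux D u L
  have hcell : ∀ y, MeasurableSet (g ⁻¹' {y}) := fun y =>
    measurable_genAux D (measurableSet_singleton y)
  have hscore : ∀ y, EqOn (fun u => ∑ j, score (y j) (u j)) (fun u => ∑ j, score (g u j) (u j))
      (g ⁻¹' {y}) := fun y u (hu : g u = y) => by simp only [hu]
  have hint : ∀ y, IntegrableOn (fun u => ∑ j, score (g u j) (u j)) (g ⁻¹' {y}) P := by
    intro y
    refine IntegrableOn.congr_fun ?_ (hscore y) (hcell y)
    rw [IntegrableOn, restrict_pi_preimage_genAux]
    exact integrable_finsetSum _ fun j _ => integrable_comp_eval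
      (integrable_score (condProb_nonneg D j y) (condProb_le_one D j y) _)
  have hval : ∀ y, ∫ u in g ⁻¹' {y}, ∑ j, score (g u j) (u j) ∂P =
      L * (D y).toReal + negMulLog (D y).toReal := by
    intro y
    rw [← setIntegral_congr_fun (hcell y) (hscore y), restrict_pi_preimage_genAux,
      integral_sum_score_pi (condProb_nonneg D · y) (condProb_le_one D · y),
      prod_bitMass_condProb, Fintype.card_fin]
  calc ∫ u, ∑ j, score (g u j) (u j) ∂P
      = ∫ u in ⋃ y, g ⁻¹' {y}, ∑ j, score (g u j) (u j) ∂P := by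
        rw [← preimage_iUnion, iUnion_of_singleton, preimage_univ, Measure.restrict_univ]
    _ = ∑ y, ∫ u in g ⁻¹' {y}, ∑ j, score (g u j) (u j) ∂P :=
        integral_iUnion_fintype hcell (fun y z hyz => (disjoint_singleton.2 hyz).preimage g) hint
    _ = L + ∑ y, negMulLog (D y).toReal := by
        rw [Finset.sum_congr rfl fun y _ => hval y, Finset.sum_add_distrib, ← Finset.mul_sum,
          sum_toReal_eq_one, mul_one]

end Generation

lemma log_two_mul_neg_mul_logb (p : ℝ) : log 2 * -(p * logb 2 p) = negMulLog p := by
  rw [logb, negMulLog]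
  field_simp

end Watermark

open Watermark

theorem watermarked_text_distribution_and_score_general
    {Ω : Type*} [MeasurableSpace Ω] (μ : Measure Ω)
    (L : ℕ) (D : PMF (Fin L → Bool))
    (U : Fin L → Ω → ℝ) (hmeas : ∀ j, Measurable (U j))
    (hindep : iIndepFun U μ)
    (hunif : ∀ j, μ.map (U j) = volume.restrict (Set.Icc (0 : ℝ) 1)) :
    μ.map (fun ω => genAux D (fun j => U j ω) L) = D.toMeasure ∧
    (∫ ω, ∑ j, (if genAux D (fun j' => U j' ω) L j
          then Real.log (1 / U j ω) else Real.log (1 / (1 - U j ω))) ∂μ)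
      = (L : ℝ) + Real.log 2 *
          (∑ y : Fin L → Bool, -((D y).toReal * Real.logb 2 (D y).toReal)) := by
  have hU : Measurable fun ω j => U j ω := measurable_pi_lambda _ hmeas
  have hlaw : μ.map (fun ω j => U j ω) = Measure.pi fun _ => volume.restrict (Set.Icc 0 1) := by
    rw [hindep.map_fun_eq_pi_map fun j => (hmeas j).aemeasurable]
    simp_rw [hunif]
  constructor
  · rw [← map_genAux_pi D, ← hlaw, Measure.map_map (measurable_genAux D) hU]
    rfl
  · simp_rw [Finset.mul_sum, log_two_mul_neg_mul_logb, ← integral_sum_score_genAux D, ← hlaw,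
      integral_map hU.aemeasurable (measurable_sum_score_genAux D).aestronglyMeasurable]
    rfl

/-- Thresholding i.i.d. uniforms against the model's conditional probabilities
produces a string `X` distributed exactly according to `D`, while the expected
detection score `E[∑_j s(X_j, U_j)]`, with `s(1,u) = ln(1/u)` and
`s(0,u) = ln(1/(1−u))`, equals `L + ln(2)·H(D)` where `H(D)` is the Shannon
entropy (base 2) of `D`. -/
theorem watermarked_text_distribution_and_score
    {Ω : Type*} [MeasurableSpace Ω] (μ : Measure Ω) [IsProbabilityMeasure μ]
    (L : ℕ) (hL : 1 ≤ L) (D : PMF (Fin L → Bool))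
    (U : Fin L → Ω → ℝ) (hmeas : ∀ j, Measurable (U j))
    (hindep : iIndepFun U μ)
    (hunif : ∀ j, μ.map (U j) = volume.restrict (Set.Icc (0 : ℝ) 1)) :
    μ.map (fun ω => genAux D (fun j => U j ω) L) = D.toMeasure ∧
    (∫ ω, ∑ j, (if genAux D (fun j' => U j' ω) L j
          then Real.log (1 / U j ω) else Real.log (1 / (1 - U j ω))) ∂μ)
      = (L : ℝ) + Real.log 2 *
          (∑ y : Fin L → Bool, -((D y).toReal * Real.logb 2 (D y).toReal)) :=
  watermarked_text_distribution_and_score_general μ L D U hmeas hindep hunif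
end
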